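/- Let (X_k) be a sequence of nonempty metric spaces and let Y be a nonempty metric space such that d̂(X_k, Y) → 0 as k → ∞. Then there exist base points p_k ∈ X_k and p ∈ Y such that (X_k, p_k) converges to (Y, p) in the pointed Gromov–Hausdorff sense: for every r > 0 and ε > 0 there exists n_0 such that for each n > n_0 there is a (not necessarily continuous) map f from the open ball U_r(p_n) ⊆ X_n to Y with (1) f(p_n) = p; (2) |d(x,x') − d(f(x), f(x'))| < ε for all x, x' ∈ U_r(p_n); and (3) every point of the open ball U_{r−ε}(p) ⊆ Y lies within distance < ε of some point of f(U_r(p_n)). -/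

import Mathlib

/-!
Take a base point `q ∈ Y` and, for every large `k`, a `(1 + c k, c k, c k)`-quasi-isometry
`F_k : X_k → Y`, `G_k : Y → X_k` with `c k → 0`; put `p_k = G_k q`. On a ball of radius `r`
a `(1 + c, c)`-quasi-isometric embedding distorts distances by at most `c (2r + 1)`, and changing
`F_k` at the single point `p_k` so that it hits `q` costs at most `2c` more, since `F_k (G_k q)`
is `c`-close to `q`. Every `y` in the ball of radius `r - ε` about `q` is `c`-close to
`F_k (G_k y)`, and `G_k y` lies in the ball of radius `r` about `p_k` once `c (r + 1) < ε`.
-/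

open ENNReal

/-- `f` is an `(A,B)`-quasi-isometric embedding. -/
def QIEmb {X Y : Type*} [MetricSpace X] [MetricSpace Y] (A B : ℝ) (f : X → Y) : Prop :=
  ∀ x x' : X, (1 / A) * dist x x' - B ≤ dist (f x) (f x') ∧
    dist (f x) (f x') ≤ A * dist x x' + B

/-- `X` and `Y` are `(A,B,C)`-quasi-isometric. -/
def QuasiIsometric (X Y : Type*) [MetricSpace X] [MetricSpace Y] (A B C : ℝ) : Prop :=
  ∃ (f : X → Y) (g : Y → X), QIEmb A B f ∧ QIEmb A B g ∧
    (∀ x : X, dist (g (f x)) x ≤ C) ∧ (∀ y : Y, dist (f (g y)) y ≤ C)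

/-- The quasi-isometric distance `d̂`. -/
noncomputable def qiDist (X Y : Type*) [MetricSpace X] [MetricSpace Y] : ℝ≥0∞ :=
  sInf {e : ℝ≥0∞ | ∃ r : ℝ, 0 < r ∧ e = ENNReal.ofReal r ∧ QuasiIsometric X Y (1 + r) r r}

open Filter Topology

section

variable {X Y : Type*} [MetricSpace X] [MetricSpace Y]

def PointedGHApprox (p : X) (q : Y) (r ε : ℝ) : Prop :=
  ∃ f : ↥(Metric.ball p r) → Y,
    (∀ x : ↥(Metric.ball p r), (x : X) = p → f x = q) ∧
    (∀ x x' : ↥(Metric.ball p r), |dist (x : X) (x' : X) - dist (f x) (f x')| < ε) ∧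
    (∀ y ∈ Metric.ball q (r - ε), ∃ x : ↥(Metric.ball p r), dist y (f x) < ε)

theorem QIEmb.abs_dist_sub_le {F : X → Y} {c : ℝ} (hc : 0 ≤ c) (hF : QIEmb (1 + c) c F)
    (x x' : X) : |dist x x' - dist (F x) (F x')| ≤ c * (dist x x' + 1) := by
  obtain ⟨hlower, hupper⟩ := hF x x'
  have hd := dist_nonneg (x := x) (y := x')
  -- `d - d / (1 + c) = c d / (1 + c) ≤ c d`
  have hshrink : dist x x' - c * dist x x' ≤ 1 / (1 + c) * dist x x' := by
    rw [one_div_mul_eq_div, le_div_iff₀ (by linarith)]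
    nlinarith [mul_nonneg (mul_nonneg hc hc) hd]
  rw [abs_le]
  constructor <;> nlinarith

theorem pointedGHApprox_of_quasiIsometric {F : X → Y} {G : Y → X} {c r ε : ℝ} (hc : 0 ≤ c)
    (hF : QIEmb (1 + c) c F) (hG : QIEmb (1 + c) c G) (hFG : ∀ y, dist (F (G y)) y ≤ c)
    (q : Y) (hr : 0 < r) (hε : c * (2 * r + 3) < ε) : PointedGHApprox (G q) q r ε := by
  classical
  set f : ↥(Metric.ball (G q) r) → Y := fun x => if (x : X) = G q then q else F x
  have hfF : ∀ x, dist (f x) (F x) ≤ c := by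
    intro x
    by_cases hx : (x : X) = G q
    · simpa only [f, if_pos hx, hx, dist_comm] using hFG q
    · simpa only [f, if_neg hx, dist_self] using hc
  refine ⟨f, fun x hx => if_pos hx, fun x x' => ?_, fun y hy => ?_⟩
  · have hxx' : dist (x : X) x' < 2 * r := by
      linarith [dist_triangle_right (x : X) x' (G q), Metric.mem_ball.mp x.2,
        Metric.mem_ball.mp x'.2]
    have hmodify : |dist (F x) (F x') - dist (f x) (f x')| ≤ 2 * c := by
      rw [abs_sub_comm, ← Real.dist_eq]
      linarith [dist_dist_dist_le (f x) (f x') (F x) (F x'), hfF x, hfF x']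
    calc |dist (x : X) x' - dist (f x) (f x')|
        ≤ |dist (x : X) x' - dist (F x) (F x')| + |dist (F x) (F x') - dist (f x) (f x')| :=
          abs_sub_le _ _ _
      _ ≤ c * (dist (x : X) x' + 1) + 2 * c := add_le_add (hF.abs_dist_sub_le hc x x') hmodify
      _ ≤ c * (2 * r + 3) := by nlinarith
      _ < ε := hε
  · have hyq : dist y q < r - ε := Metric.mem_ball.mp hy
    have hGy : G y ∈ Metric.ball (G q) r := by
      rw [Metric.mem_ball]
      calc dist (G y) (G q) ≤ (1 + c) * dist y q + c := (hG y q).2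
        _ ≤ (1 + c) * (r - ε) + c := by gcongr
        _ < r := by nlinarith [mul_nonneg hc (show 0 ≤ ε by nlinarith)]
    refine ⟨⟨G y, hGy⟩, ?_⟩
    calc dist y (f ⟨G y, hGy⟩) ≤ dist y (F (G y)) + dist (f ⟨G y, hGy⟩) (F (G y)) :=
          dist_triangle_right _ _ _
      _ ≤ c + c := add_le_add (by simpa only [dist_comm] using hFG y) (hfF _)
      _ < ε := by nlinarith

theorem exists_quasiIsometric_of_qiDist_lt {δ : ℝ} (h : qiDist X Y < ENNReal.ofReal δ) :
    ∃ c, 0 < c ∧ c < δ ∧ QuasiIsometric X Y (1 + c) c c := by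
  obtain ⟨_, ⟨c, hc, rfl, hqi⟩, hlt⟩ := sInf_lt_iff.mp h
  exact ⟨c, hc, (ENNReal.ofReal_lt_ofReal_iff'.mp hlt).1, hqi⟩

end

theorem exists_tendsto_zero_quasiIsometric {X : ℕ → Type*} [∀ k, MetricSpace (X k)]
    {Y : Type*} [MetricSpace Y]
    (hconv : Tendsto (fun k => qiDist (X k) Y) atTop (𝓝 0)) :
    ∃ c : ℕ → ℝ, Tendsto c atTop (𝓝 0) ∧
      ∀ᶠ k in atTop, 0 < c k ∧ QuasiIsometric (X k) Y (1 + c k) (c k) (c k) := by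
  set δ : ℕ → ℝ := fun k => (qiDist (X k) Y).toReal + 1 / (k + 1)
  have hδ : Tendsto δ atTop (𝓝 0) := by
    simpa [δ] using ((ENNReal.tendsto_toReal ENNReal.zero_ne_top).comp hconv).add
      tendsto_one_div_add_atTop_nhds_zero_nat
  have hlt : ∀ᶠ k in atTop, qiDist (X k) Y < ENNReal.ofReal (δ k) := by
    filter_upwards [hconv.eventually_ne ENNReal.zero_ne_top] with k hk
    rw [← ENNReal.ofReal_toReal hk, ENNReal.ofReal_lt_ofReal_iff (by positivity)]
    exact lt_add_of_pos_right _ (by positivity)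
  obtain ⟨c, hc⟩ := (hlt.mono fun k => exists_quasiIsometric_of_qiDist_lt).choice
  refine ⟨c, tendsto_of_tendsto_of_tendsto_of_le_of_le' tendsto_const_nhds hδ
    (hc.mono fun k h => h.1.le) (hc.mono fun k h => h.2.1.le), hc.mono fun k h => ⟨h.1, h.2.2⟩⟩

/-- Quasi-isometric convergence implies pointed Gromov–Hausdorff convergence. -/
theorem qi_convergence_implies_pointed_GH_convergence
    (X : ℕ → Type*) [∀ k, MetricSpace (X k)] [∀ k, Nonempty (X k)]
    (Y : Type*) [MetricSpace Y] [Nonempty Y]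
    (hconv : Tendsto (fun k => qiDist (X k) Y) atTop (nhds 0)) :
    ∃ (p : ∀ k, X k) (p₀ : Y),
      ∀ r > (0 : ℝ), ∀ ε > (0 : ℝ), ∃ n₀ : ℕ, ∀ n > n₀,
        ∃ f : ↥(Metric.ball (p n) r) → Y,
          (∀ x : ↥(Metric.ball (p n) r), (x : X n) = p n → f x = p₀) ∧
          (∀ x x' : ↥(Metric.ball (p n) r),
            |dist (x : X n) (x' : X n) - dist (f x) (f x')| < ε) ∧
          (∀ y ∈ Metric.ball p₀ (r - ε), ∃ x : ↥(Metric.ball (p n) r), dist y (f x) < ε) := by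
  obtain ⟨c, hc_lim, hc_qi⟩ := exists_tendsto_zero_quasiIsometric hconv
  have hmaps : ∀ k, ∃ (F : X k → Y) (G : Y → X k),
      QuasiIsometric (X k) Y (1 + c k) (c k) (c k) →
        QIEmb (1 + c k) (c k) F ∧ QIEmb (1 + c k) (c k) G ∧ ∀ y, dist (F (G y)) y ≤ c k := by
    intro k
    by_cases hqi : QuasiIsometric (X k) Y (1 + c k) (c k) (c k)
    · obtain ⟨F, G, hF, hG, -, hFG⟩ := hqi
      exact ⟨F, G, fun _ => ⟨hF, hG, hFG⟩⟩
    · exact ⟨fun _ => Classical.arbitrary Y, fun _ => Classical.arbitrary (X k), hqi.elim⟩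
  choose F G hFG using hmaps
  let q : Y := Classical.arbitrary Y
  refine ⟨fun k => G k q, q, fun r hr ε hε => ?_⟩
  have hsmall : ∀ᶠ k in atTop, c k * (2 * r + 3) < ε :=
    (hc_lim.mul_const _).eventually_lt_const (by simpa using hε)
  obtain ⟨n₀, hn₀⟩ := eventually_atTop.mp (hsmall.and hc_qi)
  refine ⟨n₀, fun n hn => ?_⟩
  obtain ⟨hε_n, hc_pos, hqi⟩ := hn₀ n hn.le
  obtain ⟨hF, hG, hFG⟩ := hFG n hqi
  exact pointedGHApprox_of_quasiIsometric hc_pos.le hF hG hFG q hr hε_n
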